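/- The function D(z) = r(-z)² - z·r(-z), where r(t) = φ(t)/Φ(t) is the standard normal inverse Mills ratio, is strictly increasing in z. -/

import Mathlib

/-!
Write `λ(z) = r(-z) = φ(z)/Φ(-z)`. Then `λ' = λ² - zλ`, so `D = λ'`, and with
`M₀ = ∫_{t>0} e^{-zt-t²/2}`, `M₁ = ∫_{t>0} t e^{-zt-t²/2}` one has `λ M₀ = 1` and
`z M₀ + M₁ = 1` (integration by parts), which turn `D'` into `λ³ (M₁ + M₁² - M₀²)`.
Viewing `M₀²` and `M₁²` as integrals of convolutions of functions supported on `(0, ∞)`, the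
integrand of `M₁ + M₁² - M₀²` at `u > 0` is
`e^{-zu} (u e^{-u²/2} - ∫₀ᵘ (1 - s(u-s)) e^{-(s²+(u-s)²)/2} ds)`.
After centering `s = u/2 + v` its positivity becomes `∫_{-a}^{a} (1 - a² + v²) e^{-v²} dv < 2a e^{-a²}` for `a > 0`, which
follows from two monotonicity arguments starting at `a = 0`.
-/

noncomputable def phi (t : ℝ) : ℝ := (Real.sqrt (2 * Real.pi))⁻¹ * Real.exp (-t ^ 2 / 2)

noncomputable def Phi (t : ℝ) : ℝ := ∫ u in Set.Iic t, phi u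

noncomputable def millsR (t : ℝ) : ℝ := phi t / Phi t

noncomputable def Dfun (z : ℝ) : ℝ := millsR (-z) ^ 2 - z * millsR (-z)

open Real Set MeasureTheory Filter ProbabilityTheory Topology
open scoped Convolution

lemma phi_eq_gaussianPDFReal : phi = gaussianPDFReal 0 1 := by
  ext t
  simp [phi, gaussianPDFReal]

lemma phi_pos (t : ℝ) : 0 < phi t := by
  rw [phi_eq_gaussianPDFReal]
  exact gaussianPDFReal_pos 0 1 t one_ne_zero

lemma phi_neg (t : ℝ) : phi (-t) = phi t := by simp [phi]

lemma integrable_phi : Integrable phi := phi_eq_gaussianPDFReal ▸ integrable_gaussianPDFReal 0 1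

lemma continuous_phi : Continuous phi := by unfold phi; fun_prop

lemma hasDerivAt_phi (t : ℝ) : HasDerivAt phi (-t * phi t) t := by
  have h : HasDerivAt (fun t : ℝ => -t ^ 2 / 2) (-t) t :=
    ((hasDerivAt_pow 2 t).neg.div_const 2).congr_deriv (by push_cast; ring)
  exact ((h.exp).const_mul (√(2 * π))⁻¹).congr_deriv (by rw [phi]; ring)

lemma hasDerivAt_Phi (t : ℝ) : HasDerivAt Phi (phi t) t := by
  have hPhi : ∀ s, Phi s = Phi 0 + ∫ u in (0 : ℝ)..s, phi u := fun s => by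
    rw [Phi, Phi, ← intervalIntegral.integral_Iic_sub_Iic integrable_phi.integrableOn
      integrable_phi.integrableOn]
    ring
  rw [funext hPhi]
  exact ((continuous_phi.integral_hasStrictDerivAt 0 t).hasDerivAt).const_add _

lemma setIntegral_Ioi_pos {f : ℝ → ℝ} {a : ℝ} (hf : IntegrableOn f (Ioi a))
    (hpos : ∀ x ∈ Ioi a, 0 < f x) : 0 < ∫ x in Ioi a, f x := by
  rw [setIntegral_pos_iff_support_of_nonneg_ae
    ((ae_restrict_iff' measurableSet_Ioi).2 (ae_of_all _ fun x hx => (hpos x hx).le)) hf,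
    inter_eq_right.2 fun x hx => Function.mem_support.2 (hpos x hx).ne', Real.volume_Ioi]
  simp

-- `φ (z + t) = φ z * tailWeight z t`, so `tailMoment0 z = Φ (-z) / φ z` is the Mills ratio.
noncomputable def tailWeight (z t : ℝ) : ℝ := exp (-(z * t) - t ^ 2 / 2)

noncomputable def tailMoment0 (z : ℝ) : ℝ := ∫ t in Ioi 0, tailWeight z t

noncomputable def tailMoment1 (z : ℝ) : ℝ := ∫ t in Ioi 0, t * tailWeight z t

@[fun_prop]
lemma continuous_tailWeight (z : ℝ) : Continuous (tailWeight z) := by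
  unfold tailWeight; fun_prop

lemma tailWeight_pos (z t : ℝ) : 0 < tailWeight z t := exp_pos _

lemma tailWeight_eq (z t : ℝ) :
    tailWeight z t = exp (z ^ 2 / 2) * exp (-(2⁻¹ : ℝ) * (t + z) ^ 2) := by
  rw [tailWeight, ← exp_add]; ring_nf

lemma integrable_tailWeight (z : ℝ) : Integrable (tailWeight z) := by
  simp_rw [funext (tailWeight_eq z)]
  exact ((integrable_exp_neg_mul_sq (by norm_num)).comp_add_right z).const_mul _

lemma integrable_mul_tailWeight (z : ℝ) : Integrable (fun t => t * tailWeight z t) := by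
  have h := (((integrable_mul_exp_neg_mul_sq (b := 2⁻¹) (by norm_num)).comp_add_right z
    ).const_mul (exp (z ^ 2 / 2))).sub ((integrable_tailWeight z).const_mul z)
  refine h.congr (ae_of_all _ fun t => ?_)
  simp only [Pi.sub_apply, tailWeight_eq]
  ring

lemma tailMoment0_pos (z : ℝ) : 0 < tailMoment0 z :=
  setIntegral_Ioi_pos (integrable_tailWeight z).integrableOn fun t _ => tailWeight_pos z t

lemma setIntegral_Ioi_comp_add_right (f : ℝ → ℝ) (a z : ℝ) :
    ∫ x in Ioi a, f (x + z) = ∫ x in Ioi (a + z), f x := by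
  have hz : MeasurableEmbedding (fun x : ℝ => x + z) :=
    (Homeomorph.addRight z).isClosedEmbedding.measurableEmbedding
  have h := hz.setIntegral_map (μ := volume) f (Ioi (a + z))
  rw [map_add_right_eq_self] at h
  rw [h]
  congr 1
  ext x
  simp

lemma Phi_neg_eq_phi_mul_tailMoment0 (z : ℝ) : Phi (-z) = phi z * tailMoment0 z := by
  have hflip : Phi (-z) = ∫ x in Ioi z, phi x := by
    rw [Phi, ← neg_neg z, ← integral_comp_neg_Iic, neg_neg]
    simp_rw [phi_neg]
  rw [hflip, ← zero_add z, ← setIntegral_Ioi_comp_add_right, zero_add, tailMoment0,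
    ← integral_const_mul]
  refine setIntegral_congr_fun measurableSet_Ioi fun x _ => ?_
  rw [phi, phi, tailWeight, mul_assoc, ← exp_add]
  ring_nf

lemma Phi_pos (t : ℝ) : 0 < Phi t := by
  rw [← neg_neg t, Phi_neg_eq_phi_mul_tailMoment0]
  exact mul_pos (phi_pos _) (tailMoment0_pos _)

lemma hasDerivAt_tailWeight (z t : ℝ) :
    HasDerivAt (tailWeight z) (-(z + t) * tailWeight z t) t := by
  have h : HasDerivAt (fun t : ℝ => -(z * t) - t ^ 2 / 2) (-(z + t)) t :=
    (((hasDerivAt_id t).const_mul z).neg.sub ((hasDerivAt_pow 2 t).div_const 2)).congr_deriv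
      (by push_cast; ring)
  exact h.exp.congr_deriv (by rw [tailWeight]; ring)

lemma tendsto_tailWeight_atTop (z : ℝ) : Tendsto (tailWeight z) atTop (𝓝 0) := by
  have h : Tendsto (fun t : ℝ => z ^ 2 / 2 - (t + z) ^ 2 / 2) atTop atBot :=
    tendsto_atBot_add_const_left _ _ <| tendsto_neg_atTop_atBot.comp <|
      ((tendsto_pow_atTop two_ne_zero).comp
        (tendsto_atTop_add_const_right _ z tendsto_id)).atTop_div_const two_pos
  refine (tendsto_exp_atBot.comp h).congr fun t => ?_
  simp only [Function.comp, tailWeight]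
  ring_nf

lemma mul_tailMoment0_add_tailMoment1 (z : ℝ) : z * tailMoment0 z + tailMoment1 z = 1 := by
  have hint : Integrable (fun t => (z + t) * tailWeight z t) :=
    (((integrable_tailWeight z).const_mul z).add (integrable_mul_tailWeight z)).congr
      (ae_of_all _ fun t => by simp only [Pi.add_apply]; ring)
  have h := integral_Ioi_of_hasDerivAt_of_tendsto' (f := fun t => -tailWeight z t) (a := 0)
    (fun t _ => (hasDerivAt_tailWeight z t).neg.congr_deriv (by ring))
    hint.integrableOn (by simpa using (tendsto_tailWeight_atTop z).neg)
  rw [tailMoment0, tailMoment1, ← integral_const_mul, ← integral_add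
    ((integrable_tailWeight z).const_mul z).integrableOn (integrable_mul_tailWeight z).integrableOn]
  simpa [add_mul, tailWeight] using h

lemma hasDerivAt_intervalIntegral_neg_self {f : ℝ → ℝ} (hf : Continuous f) (a : ℝ) :
    HasDerivAt (fun a => ∫ v in -a..a, f v) (f a + f (-a)) a := by
  have h := (hf.integral_hasStrictDerivAt 0 a).hasDerivAt.sub
    ((hf.integral_hasStrictDerivAt 0 (-a)).hasDerivAt.comp a (hasDerivAt_neg a))
  refine (h.congr_deriv (by simp)).congr_of_eventuallyEq (Eventually.of_forall fun x => ?_)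
  exact (intervalIntegral.integral_interval_sub_left (hf.intervalIntegrable 0 x)
    (hf.intervalIntegrable 0 (-x))).symm

lemma lt_of_hasDerivAt_pos {f f' : ℝ → ℝ} (hf : ∀ x, HasDerivAt f (f' x) x) {b a : ℝ}
    (hf' : ∀ x, b < x → 0 < f' x) (hba : b < a) : f b < f a :=
  strictMonoOn_of_hasDerivWithinAt_pos (convex_Ici b)
    (fun x _ => (hf x).continuousAt.continuousWithinAt)
    (fun x _ => (hf x).hasDerivWithinAt) (by simpa using hf') self_mem_Ici hba.le hba

lemma hasDerivAt_exp_neg_sq (x : ℝ) :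
    HasDerivAt (fun x => exp (-x ^ 2)) (-2 * x * exp (-x ^ 2)) x :=
  ((hasDerivAt_pow 2 x).neg.exp).congr_deriv
    (by simp only [Pi.neg_apply, Nat.cast_ofNat, Nat.add_one_sub_one, pow_one]; ring)

lemma two_mul_mul_exp_neg_sq_lt_integral {a : ℝ} (ha : 0 < a) :
    2 * a * exp (-a ^ 2) < ∫ v in -a..a, exp (-v ^ 2) := by
  have hderiv (x : ℝ) :
      HasDerivAt (fun x => (∫ v in -x..x, exp (-v ^ 2)) - 2 * x * exp (-x ^ 2))
        (4 * x ^ 2 * exp (-x ^ 2)) x :=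
    ((hasDerivAt_intervalIntegral_neg_self (by fun_prop) x).sub
      (((hasDerivAt_id x).const_mul 2).mul (hasDerivAt_exp_neg_sq x))).congr_deriv
      (by simp only [even_two, Even.neg_pow, id_eq]; ring)
  have := lt_of_hasDerivAt_pos hderiv (fun x hx => by positivity) ha
  simp only [neg_zero, intervalIntegral.integral_same, mul_zero] at this
  linarith

lemma integral_one_sub_sq_add_sq_mul_exp_neg_sq_lt {a : ℝ} (ha : 0 < a) :
    ∫ v in -a..a, (1 - a ^ 2 + v ^ 2) * exp (-v ^ 2) < 2 * a * exp (-a ^ 2) := by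
  have hderiv (x : ℝ) :
      HasDerivAt (fun x => 2 * x * exp (-x ^ 2) + x ^ 2 * (∫ v in -x..x, exp (-v ^ 2))
          - ∫ v in -x..x, (1 + v ^ 2) * exp (-v ^ 2))
        (2 * x * ((∫ v in -x..x, exp (-v ^ 2)) - 2 * x * exp (-x ^ 2))) x :=
    ((((hasDerivAt_id x).const_mul 2).mul (hasDerivAt_exp_neg_sq x)).add
      ((hasDerivAt_pow 2 x).mul (hasDerivAt_intervalIntegral_neg_self (by fun_prop) x))).sub
      (hasDerivAt_intervalIntegral_neg_self (by fun_prop) x) |>.congr_deriv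
      (by simp only [id_eq, Nat.cast_ofNat, Nat.add_one_sub_one, pow_one, even_two, Even.neg_pow]
          ring)
  have := lt_of_hasDerivAt_pos hderiv
    (fun x hx => mul_pos (by positivity) (sub_pos.2 (two_mul_mul_exp_neg_sq_lt_integral hx))) ha
  have hsplit : ∫ v in -a..a, (1 - a ^ 2 + v ^ 2) * exp (-v ^ 2)
      = (∫ v in -a..a, (1 + v ^ 2) * exp (-v ^ 2)) - a ^ 2 * ∫ v in -a..a, exp (-v ^ 2) := by
    rw [← intervalIntegral.integral_const_mul, ← intervalIntegral.integral_sub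
      (Continuous.intervalIntegrable (by fun_prop) _ _)
      (Continuous.intervalIntegrable (by fun_prop) _ _)]
    congr 1 with v
    ring
  simp only [mul_zero, neg_zero, intervalIntegral.integral_same, add_zero] at this
  linarith

lemma convolution_indicator_Ioi (f g : ℝ → ℝ) (u : ℝ) :
    ((Ioi 0).indicator f ⋆[ContinuousLinearMap.mul ℝ ℝ] (Ioi 0).indicator g) u
      = ∫ s in Ioo 0 u, f s * g (u - s) := by
  rw [convolution_def, ← integral_indicator measurableSet_Ioo]
  congr 1 with s
  simp only [ContinuousLinearMap.mul_apply', indicator_apply, mem_Ioi, mem_Ioo, sub_pos]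
  split_ifs <;> simp_all

lemma integral_one_sub_mul_mul_exp_lt {u : ℝ} (hu : 0 < u) :
    ∫ s in Ioo 0 u, (1 - s * (u - s)) * exp (-(s ^ 2 + (u - s) ^ 2) / 2)
      < u * exp (-u ^ 2 / 2) := by
  -- center at `s = u / 2 + v`: the exponent becomes `-(u / 2)² - v²`
  obtain ⟨a, rfl⟩ : ∃ a, u = 2 * a := ⟨u / 2, by ring⟩
  have ha : 0 < a := by linarith
  have hcenter :
      ∫ s in Ioo 0 (2 * a), (1 - s * (2 * a - s)) * exp (-(s ^ 2 + (2 * a - s) ^ 2) / 2)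
        = exp (-a ^ 2) * ∫ v in -a..a, (1 - a ^ 2 + v ^ 2) * exp (-v ^ 2) := by
    rw [← intervalIntegral.integral_const_mul, ← integral_Ioc_eq_integral_Ioo,
      ← intervalIntegral.integral_of_le hu.le]
    have := intervalIntegral.integral_comp_add_right
      (fun s => (1 - s * (2 * a - s)) * exp (-(s ^ 2 + (2 * a - s) ^ 2) / 2)) (a := -a) (b := a) a
    rw [neg_add_cancel, ← two_mul] at this
    rw [← this]
    congr 1 with v
    rw [show -((v + a) ^ 2 + (2 * a - (v + a)) ^ 2) / 2 = -a ^ 2 + -v ^ 2 by ring, exp_add]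
    ring
  have hrhs : 2 * a * exp (-(2 * a) ^ 2 / 2) = exp (-a ^ 2) * (2 * a * exp (-a ^ 2)) := by
    rw [show -(2 * a) ^ 2 / 2 = -a ^ 2 + -a ^ 2 by ring, exp_add]
    ring
  rw [hcenter, hrhs]
  exact mul_lt_mul_of_pos_left (integral_one_sub_sq_add_sq_mul_exp_neg_sq_lt ha) (exp_pos _)

lemma tailWeight_mul_tailWeight_sub (z u s : ℝ) :
    tailWeight z s * tailWeight z (u - s) = exp (-(z * u)) * exp (-(s ^ 2 + (u - s) ^ 2) / 2) := by
  simp only [tailWeight, ← exp_add]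
  ring_nf

lemma integral_tailWeight_mul_lt (z : ℝ) {u : ℝ} (hu : 0 < u) :
    ∫ s in Ioo 0 u, tailWeight z s * tailWeight z (u - s)
      < u * tailWeight z u
        + ∫ s in Ioo 0 u, s * tailWeight z s * ((u - s) * tailWeight z (u - s)) := by
  have hint (f : ℝ → ℝ) (hf : Continuous f) : IntegrableOn f (Ioo 0 u) :=
    hf.integrableOn_Icc.mono_set Ioo_subset_Icc_self
  rw [← sub_lt_iff_lt_add, ← integral_sub (hint _ (by fun_prop)) (hint _ (by fun_prop))]
  calc ∫ s in Ioo 0 u, tailWeight z s * tailWeight z (u - s)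
        - s * tailWeight z s * ((u - s) * tailWeight z (u - s))
      = exp (-(z * u))
          * ∫ s in Ioo 0 u, (1 - s * (u - s)) * exp (-(s ^ 2 + (u - s) ^ 2) / 2) := by
        rw [← integral_const_mul]
        congr 1 with s
        rw [mul_mul_mul_comm, tailWeight_mul_tailWeight_sub]
        ring
    _ < exp (-(z * u)) * (u * exp (-u ^ 2 / 2)) :=
        mul_lt_mul_of_pos_left (integral_one_sub_mul_mul_exp_lt hu) (exp_pos _)
    _ = u * tailWeight z u := by
        rw [tailWeight, sub_eq_add_neg, exp_add, neg_div]
        ring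

lemma sq_tailMoment0_lt (z : ℝ) : tailMoment0 z ^ 2 < tailMoment1 z + tailMoment1 z ^ 2 := by
  set A := (Ioi (0 : ℝ)).indicator (tailWeight z)
  set B := (Ioi (0 : ℝ)).indicator (fun t => t * tailWeight z t)
  set L := ContinuousLinearMap.mul ℝ ℝ
  have hA : Integrable A := (integrable_tailWeight z).indicator measurableSet_Ioi
  have hB : Integrable B := (integrable_mul_tailWeight z).indicator measurableSet_Ioi
  set g := fun u => B u + (B ⋆[L] B) u - (A ⋆[L] A) u
  have hg : Integrable g :=
    (hB.add (hB.integrable_convolution L hB)).sub (hA.integrable_convolution L hA)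
  have hg_eq : ∫ u, g u = tailMoment1 z + tailMoment1 z ^ 2 - tailMoment0 z ^ 2 := by
    simp only [g]
    rw [integral_sub (f := fun u => B u + (B ⋆[L] B) u) (hB.add (hB.integrable_convolution L hB))
        (hA.integrable_convolution L hA),
      integral_add hB (hB.integrable_convolution L hB), integral_convolution L hB hB,
      integral_convolution L hA hA, integral_indicator measurableSet_Ioi,
      integral_indicator measurableSet_Ioi]
    simp only [L, ContinuousLinearMap.mul_apply', tailMoment0, tailMoment1]
    ring
  have hg_pos (u : ℝ) (hu : u ∈ Ioi 0) : 0 < g u := by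
    simp only [g, A, B, L, convolution_indicator_Ioi, indicator_of_mem hu]
    linarith [integral_tailWeight_mul_lt z hu]
  have hg_zero (u : ℝ) (hu : u ∉ Ioi 0) : g u = 0 := by
    have : Ioo (0 : ℝ) u = ∅ := Ioo_eq_empty hu
    simp only [g, A, B, L, convolution_indicator_Ioi, indicator_of_notMem hu, this,
      setIntegral_empty]
    ring
  have := setIntegral_Ioi_pos hg.integrableOn hg_pos
  rw [setIntegral_eq_integral_of_forall_compl_eq_zero hg_zero, hg_eq] at this
  linarith

lemma millsR_pos (t : ℝ) : 0 < millsR t := div_pos (phi_pos t) (Phi_pos t)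

lemma millsR_neg_mul_tailMoment0 (z : ℝ) : millsR (-z) * tailMoment0 z = 1 := by
  rw [millsR, phi_neg, Phi_neg_eq_phi_mul_tailMoment0]
  field_simp [(phi_pos z).ne', (tailMoment0_pos z).ne']

lemma hasDerivAt_millsR_neg (z : ℝ) :
    HasDerivAt (fun z => millsR (-z)) (millsR (-z) ^ 2 - z * millsR (-z)) z := by
  have hPhi : HasDerivAt (fun z => Phi (-z)) (-phi z) z :=
    ((hasDerivAt_Phi (-z)).comp z (hasDerivAt_neg z)).congr_deriv (by rw [phi_neg]; ring)
  have h := ((hasDerivAt_phi (-z)).comp z (hasDerivAt_neg z)).div hPhi (Phi_pos (-z)).ne'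
  refine h.congr_deriv ?_
  rw [Function.comp_apply, millsR, phi_neg]
  field_simp [(Phi_pos (-z)).ne']
  ring

lemma hasDerivAt_Dfun (z : ℝ) : HasDerivAt Dfun
    (millsR (-z) ^ 3 * (tailMoment1 z + tailMoment1 z ^ 2 - tailMoment0 z ^ 2)) z := by
  have h := ((hasDerivAt_millsR_neg z).pow 2).sub ((hasDerivAt_id' z).mul (hasDerivAt_millsR_neg z))
  refine h.congr_deriv ?_
  set r := millsR (-z)
  linear_combination (3 * z * r ^ 2 + (r - z ^ 2 * r) * (r * tailMoment0 z + 1))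
      * millsR_neg_mul_tailMoment0 z
    - r ^ 3 * (2 + tailMoment1 z - z * tailMoment0 z) * mul_tailMoment0_add_tailMoment1 z

/-- `D` is strictly increasing. -/
theorem Dfun_strictMono : StrictMono Dfun :=
  strictMono_of_hasDerivAt_pos hasDerivAt_Dfun fun z =>
    mul_pos (pow_pos (millsR_pos _) 3) (sub_pos.2 (sq_tailMoment0_lt z))
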